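/- arXiv:1708.04894 — 6 statements merged into one kernel-verified Lean document; each statement's English description precedes it below -/
import Mathlib

section
/- Let ρ > 0 and let a be a nonzero quaternion with |a| < ρ. For any quaternion x with |x| = ρ and x ≠ a, the punctual ρ-Blaschke factor B(x) = (ρ² − x·aᶜ)·(ρ(x − a))⁻¹ satisfies |B(x)| = 1. -/
open Quaternion

theorem Quaternion.coe_norm_sq_sub_mul_star (x a : ℍ[ℝ]) :
    ((‖x‖ ^ 2 : ℝ) : ℍ[ℝ]) - x * star a = x * star (x - a) := by
  rw [sq, ← normSq_eq_norm_mul_self, ← self_mul_star, star_sub, mul_sub]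

theorem Quaternion.norm_coe_norm_sq_sub_mul_star (x a : ℍ[ℝ]) :
    ‖((‖x‖ ^ 2 : ℝ) : ℍ[ℝ]) - x * star a‖ = ‖x‖ * ‖x - a‖ := by
  rw [coe_norm_sq_sub_mul_star, norm_mul, norm_star]

theorem punctual_blaschke_norm_on_boundary_general (ρ : ℝ) (hρ : 0 < ρ)
    (a : Quaternion ℝ)
    (x : Quaternion ℝ) (hx : ‖x‖ = ρ) (hxa : x ≠ a) :
    ‖(((ρ^2 : ℝ) : Quaternion ℝ) - x * star a) * ((ρ : ℝ) • (x - a))⁻¹‖ = 1 := by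
  subst hx
  have hxa' : ‖x - a‖ ≠ 0 := norm_ne_zero_iff.mpr (sub_ne_zero.mpr hxa)
  rw [norm_mul, norm_inv, norm_smul, norm_coe_norm_sq_sub_mul_star, norm_norm]
  exact mul_inv_cancel₀ (mul_ne_zero hρ.ne' hxa')

/-- The punctual ρ-Blaschke factor at `a` sends the sphere of radius ρ into the
unit sphere. -/
theorem punctual_blaschke_norm_on_boundary (ρ : ℝ) (hρ : 0 < ρ)
    (a : Quaternion ℝ) (ha0 : a ≠ 0) (ha : ‖a‖ < ρ)
    (x : Quaternion ℝ) (hx : ‖x‖ = ρ) (hxa : x ≠ a) :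
    ‖(((ρ^2 : ℝ) : Quaternion ℝ) - x * star a) * ((ρ : ℝ) • (x - a))⁻¹‖ = 1 :=
  punctual_blaschke_norm_on_boundary_general ρ hρ a x hx hxa
end

section
/- Let ρ > 0 and let a be a nonzero quaternion with |a| < ρ. The punctual ρ-Blaschke factor B(x) = (ρ² − x·aᶜ)·(ρ(x − a))⁻¹ satisfies: |B(x)| < 1 for every quaternion x with |x| > ρ, and |B(x)| > 1 for every quaternion x with |x| < ρ and x ≠ a. -/
/-!
Since `‖x a*‖ = ‖x‖‖a‖` and `Re (x a*) = ⟪x, a⟫`, one has the Lagrange-type identity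
`‖ρ² - x a*‖² = ρ²‖x - a‖² + (ρ² - ‖x‖²)(ρ² - ‖a‖²)`,
so `‖B(x)‖² - 1` has the sign of `(ρ² - ‖x‖²)(ρ² - ‖a‖²)`, and `‖a‖ < ρ` fixes the sign of the second factor.
-/

open Quaternion

namespace Quaternion

theorem norm_coe_sub_mul_star_sq (r : ℝ) (x a : ℍ[ℝ]) :
    ‖(r : ℍ[ℝ]) - x * star a‖ ^ 2 = r * ‖x - a‖ ^ 2 + (r - ‖x‖ ^ 2) * (r - ‖a‖ ^ 2) := by
  simp only [sq, ← normSq_eq_norm_mul_self, normSq_def', re_sub, imI_sub, imJ_sub, imK_sub,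
    re_mul, imI_mul, imJ_mul, imK_mul, re_star, imI_star, imJ_star, imK_star, re_coe, imI_coe,
    imJ_coe, imK_coe]
  ring

end Quaternion

noncomputable def punctualBlaschke (ρ : ℝ) (a x : ℍ[ℝ]) : ℍ[ℝ] :=
  (((ρ ^ 2 : ℝ) : ℍ[ℝ]) - x * star a) * (ρ • (x - a))⁻¹

section punctualBlaschke

variable {ρ : ℝ} {a x : ℍ[ℝ]}

theorem norm_punctualBlaschke_sq (hρ : ρ ≠ 0) (hxa : x ≠ a) :
    ‖punctualBlaschke ρ a x‖ ^ 2
      = 1 + (ρ ^ 2 - ‖x‖ ^ 2) * (ρ ^ 2 - ‖a‖ ^ 2) / (ρ * ‖x - a‖) ^ 2 := by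
  have hden : (ρ * ‖x - a‖) ^ 2 ≠ 0 := pow_ne_zero 2 <| mul_ne_zero hρ <| norm_ne_zero_iff.mpr <|
    sub_ne_zero.mpr hxa
  rw [punctualBlaschke, norm_mul, norm_inv, norm_smul, Real.norm_eq_abs, ← div_eq_mul_inv, div_pow,
    mul_pow, sq_abs, ← mul_pow, norm_coe_sub_mul_star_sq, add_div_eq_mul_add_div _ _ hden]
  ring

theorem norm_punctualBlaschke_lt_one (ha : ‖a‖ < ρ) (hx : ρ < ‖x‖) :
    ‖punctualBlaschke ρ a x‖ < 1 := by
  have hρ : 0 < ρ := (norm_nonneg a).trans_lt ha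
  have hxa : x ≠ a := by rintro rfl; exact ha.not_gt hx
  have hneg : (ρ ^ 2 - ‖x‖ ^ 2) * (ρ ^ 2 - ‖a‖ ^ 2) / (ρ * ‖x - a‖) ^ 2 < 0 :=
    div_neg_of_neg_of_pos (mul_neg_of_neg_of_pos (by nlinarith) (by nlinarith [norm_nonneg a]))
      (by positivity [sub_ne_zero.mpr hxa])
  have hsq := norm_punctualBlaschke_sq hρ.ne' hxa
  nlinarith [norm_nonneg (punctualBlaschke ρ a x)]

theorem one_lt_norm_punctualBlaschke (ha : ‖a‖ < ρ) (hx : ‖x‖ < ρ) (hxa : x ≠ a) :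
    1 < ‖punctualBlaschke ρ a x‖ := by
  have hρ : 0 < ρ := (norm_nonneg a).trans_lt ha
  have hpos : 0 < (ρ ^ 2 - ‖x‖ ^ 2) * (ρ ^ 2 - ‖a‖ ^ 2) / (ρ * ‖x - a‖) ^ 2 :=
    div_pos (mul_pos (by nlinarith [norm_nonneg x]) (by nlinarith [norm_nonneg a]))
      (by positivity [sub_ne_zero.mpr hxa])
  have hsq := norm_punctualBlaschke_sq hρ.ne' hxa
  nlinarith [norm_nonneg (punctualBlaschke ρ a x)]

end punctualBlaschke

theorem punctual_blaschke_norm_inside_outside_general (ρ : ℝ)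
    (a : Quaternion ℝ) (ha : ‖a‖ < ρ) :
    (∀ x : Quaternion ℝ, ρ < ‖x‖ →
      ‖(((ρ^2 : ℝ) : Quaternion ℝ) - x * star a) * ((ρ : ℝ) • (x - a))⁻¹‖ < 1) ∧
    (∀ x : Quaternion ℝ, ‖x‖ < ρ → x ≠ a →
      1 < ‖(((ρ^2 : ℝ) : Quaternion ℝ) - x * star a) * ((ρ : ℝ) • (x - a))⁻¹‖) :=
  ⟨fun _ hx => norm_punctualBlaschke_lt_one ha hx,
    fun _ hx hxa => one_lt_norm_punctualBlaschke ha hx hxa⟩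

/-- The punctual ρ-Blaschke factor at `a` maps the outside of the ball of radius ρ
into the unit ball and the inside (minus `a`) outside the closed unit ball. -/
theorem punctual_blaschke_norm_inside_outside (ρ : ℝ) (hρ : 0 < ρ)
    (a : Quaternion ℝ) (ha0 : a ≠ 0) (ha : ‖a‖ < ρ) :
    (∀ x : Quaternion ℝ, ρ < ‖x‖ →
      ‖(((ρ^2 : ℝ) : Quaternion ℝ) - x * star a) * ((ρ : ℝ) • (x - a))⁻¹‖ < 1) ∧
    (∀ x : Quaternion ℝ, ‖x‖ < ρ → x ≠ a →
      1 < ‖(((ρ^2 : ℝ) : Quaternion ℝ) - x * star a) * ((ρ : ℝ) • (x - a))⁻¹‖) :=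
  punctual_blaschke_norm_inside_outside_general ρ a ha
end

section
/- Let q₀, q₁ be quaternions with q₁ ≠ q₀ᶜ. Then the quaternionic polynomial P(x) = x² − x(q₀ + q₁) + q₀q₁ vanishes at x = q₀ and at x = (q₁ − q₀ᶜ)⁻¹ · q₁ · (q₁ − q₀ᶜ). -/
/-! With `a = q₁ - q₀ᶜ`, evaluating `P` at `a⁻¹ q₁ a` gives `a⁻¹ (q₁² a - q₁ a (q₀ + q₁) + a q₀ q₁)`.
Expanding the bracket, everything cancels except commutators of `q₁` with `q₀ + q₀ᶜ` and with
`q₀ᶜ q₀`, and these vanish because both are real, hence central. -/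

theorem inv_mul_mul_sq_sub_mul_add {D : Type*} [DivisionRing D] {a : D} (ha : a ≠ 0)
    (q b c : D) :
    (a⁻¹ * q * a) ^ 2 - a⁻¹ * q * a * b + c = a⁻¹ * (q ^ 2 * a - q * a * b + a * c) := by
  simp only [sq, mul_add, mul_sub, mul_assoc, mul_inv_cancel_left₀ ha, inv_mul_cancel_left₀ ha]

theorem sq_mul_sub_mul_add_mul_eq_zero_of_commute {R : Type*} [Ring R] {q₀ s q₁ : R}
    (htr : Commute (q₀ + s) q₁) (hnorm : Commute (s * q₀) q₁) :
    q₁ ^ 2 * (q₁ - s) - q₁ * (q₁ - s) * (q₀ + q₁) + (q₁ - s) * (q₀ * q₁) = 0 := by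
  calc q₁ ^ 2 * (q₁ - s) - q₁ * (q₁ - s) * (q₀ + q₁) + (q₁ - s) * (q₀ * q₁)
      = (q₁ * (s * q₀) - s * q₀ * q₁) + (q₁ * (q₀ + s) * q₁ - q₁ ^ 2 * (q₀ + s)) := by
        noncomm_ring
    _ = 0 := by
        rw [hnorm.eq, ← htr.eq, ← (htr.pow_right 2).eq, sq]
        noncomm_ring

theorem QuaternionAlgebra.sq_mul_sub_star_mul_add_mul_eq_zero {R : Type*} [CommRing R]
    {c₁ c₂ c₃ : R} (q₀ q₁ : QuaternionAlgebra R c₁ c₂ c₃) :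
    q₁ ^ 2 * (q₁ - star q₀) - q₁ * (q₁ - star q₀) * (q₀ + q₁)
      + (q₁ - star q₀) * (q₀ * q₁) = 0 :=
  sq_mul_sub_mul_add_mul_eq_zero_of_commute
    (by rw [self_add_star']; exact coe_commute _ _)
    (by rw [star_mul_eq_coe]; exact coe_commute _ _)

/-- The roots of the quaternionic polynomial `x² − x(q₀ + q₁) + q₀q₁` when
`q₁ ≠ q₀ᶜ`: it vanishes at `q₀` and at `(q₁ − q₀ᶜ)⁻¹ q₁ (q₁ − q₀ᶜ)`. -/
theorem roots_of_quadratic_regular_polynomial (q₀ q₁ : Quaternion ℝ)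
    (h : q₁ ≠ star q₀) :
    q₀^2 - q₀ * (q₀ + q₁) + q₀ * q₁ = 0 ∧
    (let p := (q₁ - star q₀)⁻¹ * q₁ * (q₁ - star q₀);
      p^2 - p * (q₀ + q₁) + q₀ * q₁ = 0) := by
  refine ⟨by noncomm_ring, ?_⟩
  dsimp only
  rw [inv_mul_mul_sq_sub_mul_add (sub_ne_zero.2 h)]
  exact mul_eq_zero_of_right _ (QuaternionAlgebra.sq_mul_sub_star_mul_add_mul_eq_zero q₀ q₁)
end

section
/- For every real ε > 0 and every x ∈ ℝ⁴, the function u_ε(x) = log(|x|² + ε²) satisfies Δu_ε(x) = 4(|x|² + 2ε²)/(|x|² + ε²)² and Δ²u_ε(x) = −96 ε⁴/(|x|² + ε²)⁴. -/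
/-!
For a radial function `u(y) = g(‖y‖²)` on a real inner product space, the second directional
derivative along `e` is `2 g'(‖x‖²) ‖e‖² + 4 g''(‖x‖²) ⟪x, e⟫²`; summing over the orthonormal
basis `1, i, j, k` gives `Δu(x) = 8 g'(‖x‖²) + 4 g''(‖x‖²) ‖x‖²` on `ℍ ≅ ℝ⁴`. Both the Laplacian and
the bilaplacian of `log(‖y‖² + ε²)` are then one-variable computations with rational functions
of `s = ‖y‖²`, because `Δ log(‖y‖² + ε²) = 4 (s + 2ε²) / (s + ε²)²` is again radial.
-/

open scoped Quaternion RealInnerProductSpace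

/-- The standard real basis `1, i, j, k` of the quaternions viewed as ℝ⁴. -/
noncomputable def qBasis : Fin 4 → Quaternion ℝ
  | 0 => 1
  | 1 => ⟨0,1,0,0⟩
  | 2 => ⟨0,0,1,0⟩
  | 3 => ⟨0,0,0,1⟩

/-- The Laplacian in the four real coordinates of a quaternionic variable. -/
noncomputable def qLap (u : Quaternion ℝ → ℝ) (x : Quaternion ℝ) : ℝ :=
  ∑ i : Fin 4, fderiv ℝ (fun y => fderiv ℝ u y (qBasis i)) x (qBasis i)

lemma inner_qBasis (x : ℍ[ℝ]) (i : Fin 4) :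
    ⟪x, qBasis i⟫ = ![x.re, x.imI, x.imJ, x.imK] i := by
  simp only [Quaternion.inner_def, Quaternion.re_mul, Quaternion.re_star, Quaternion.imI_star,
    Quaternion.imJ_star, Quaternion.imK_star]
  fin_cases i <;> simp [qBasis]

lemma norm_qBasis (i : Fin 4) : ‖qBasis i‖ = 1 := by
  rw [← pow_eq_one_iff_of_nonneg (norm_nonneg _) two_ne_zero, ← real_inner_self_eq_norm_sq,
    inner_qBasis]
  fin_cases i <;> simp [qBasis]

lemma sum_inner_qBasis_sq (x : ℍ[ℝ]) : ∑ i, ⟪x, qBasis i⟫ ^ 2 = ‖x‖ ^ 2 := by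
  rw [sq ‖x‖, ← Quaternion.normSq_eq_norm_mul_self, Quaternion.normSq_def', Fin.sum_univ_four]
  simp [inner_qBasis]

section NormSq

variable {E : Type*} [NormedAddCommGroup E] [InnerProductSpace ℝ E]

lemma hasFDerivAt_comp_norm_sq {g : ℝ → ℝ} {g' : ℝ} {x : E} (hg : HasDerivAt g g' (‖x‖ ^ 2)) :
    HasFDerivAt (fun y => g (‖y‖ ^ 2)) ((2 * g') • innerSL ℝ x) x :=
  (hg.comp_hasFDerivAt x (hasStrictFDerivAt_norm_sq x).hasFDerivAt).congr_fderiv <| by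
    ext v
    simp only [smul_apply, coe_innerSL_apply, nsmul_eq_mul, Nat.cast_ofNat, smul_eq_mul]
    ring

variable {g g' g'' : ℝ → ℝ}

lemma fderiv_comp_norm_sq_apply (hg : ∀ s, 0 ≤ s → HasDerivAt g (g' s) s) (y e : E) :
    fderiv ℝ (fun z => g (‖z‖ ^ 2)) y e = 2 * g' (‖y‖ ^ 2) * ⟪y, e⟫ := by
  simp [(hasFDerivAt_comp_norm_sq (hg _ (sq_nonneg ‖y‖))).fderiv]

lemma fderiv_fderiv_comp_norm_sq_apply (hg : ∀ s, 0 ≤ s → HasDerivAt g (g' s) s)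
    (hg' : ∀ s, 0 ≤ s → HasDerivAt g' (g'' s) s) (x e : E) :
    fderiv ℝ (fun y => fderiv ℝ (fun z => g (‖z‖ ^ 2)) y e) x e
      = 2 * g' (‖x‖ ^ 2) * ‖e‖ ^ 2 + 4 * g'' (‖x‖ ^ 2) * ⟪x, e⟫ ^ 2 := by
  have h := ((hasFDerivAt_comp_norm_sq (hg' _ (sq_nonneg ‖x‖))).const_mul 2).fun_mul
    (innerSL ℝ e).hasFDerivAt
  simp only [innerSL_apply_apply, ← real_inner_comm e] at h
  simp only [fderiv_comp_norm_sq_apply hg]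
  rw [h.fderiv]
  simp only [add_apply, smul_apply, innerSL_apply_apply, real_inner_self_eq_norm_sq, smul_eq_mul]
  ring

end NormSq

lemma qLap_comp_norm_sq {g g' g'' : ℝ → ℝ}
    (hg : ∀ s, 0 ≤ s → HasDerivAt g (g' s) s) (hg' : ∀ s, 0 ≤ s → HasDerivAt g' (g'' s) s)
    (x : ℍ[ℝ]) :
    qLap (fun y => g (‖y‖ ^ 2)) x = 8 * g' (‖x‖ ^ 2) + 4 * g'' (‖x‖ ^ 2) * ‖x‖ ^ 2 := by
  simp only [qLap, fderiv_fderiv_comp_norm_sq_apply hg hg', norm_qBasis, one_pow, mul_one,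
    Finset.sum_add_distrib, ← Finset.mul_sum, sum_inner_qBasis_sq, Finset.sum_const,
    Finset.card_univ, Fintype.card_fin, nsmul_eq_mul]
  ring

lemma hasDerivAt_linear_div_pow (a b c : ℝ) (n : ℕ) {s : ℝ} (hs : s + c ≠ 0) :
    HasDerivAt (fun s => (a * s + b) / (s + c) ^ n)
      ((a * (s + c) - n * (a * s + b)) / (s + c) ^ (n + 1)) s := by
  refine ((((hasDerivAt_id' s).const_mul a).add_const b).fun_div
    (((hasDerivAt_id' s).add_const c).fun_pow n) (pow_ne_zero n hs)).congr_deriv ?_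
  rcases n with _ | n
  · field_simp
    simp
  · simp only [add_tsub_cancel_right]
    field_simp
    ring

lemma qLap_log_norm_sq_add {c : ℝ} (hc : 0 < c) (x : ℍ[ℝ]) :
    qLap (fun y => Real.log (‖y‖ ^ 2 + c)) x = 4 * (‖x‖ ^ 2 + 2 * c) / (‖x‖ ^ 2 + c) ^ 2 := by
  have hpos : ∀ s : ℝ, 0 ≤ s → s + c ≠ 0 := fun s hs => by positivity
  have hlog : ∀ s, 0 ≤ s → HasDerivAt (fun s => Real.log (s + c)) ((0 * s + 1) / (s + c) ^ 1) s :=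
    fun s hs => by simpa using ((hasDerivAt_id' s).add_const c).log (hpos s hs)
  rw [qLap_comp_norm_sq hlog fun s hs => hasDerivAt_linear_div_pow 0 1 c 1 (hpos s hs)]
  have := hpos _ (sq_nonneg ‖x‖)
  field_simp
  ring

lemma qLap_qLap_log_norm_sq_add {c : ℝ} (hc : 0 < c) (x : ℍ[ℝ]) :
    qLap (qLap fun y => Real.log (‖y‖ ^ 2 + c)) x = -96 * c ^ 2 / (‖x‖ ^ 2 + c) ^ 4 := by
  have hpos : ∀ s : ℝ, 0 ≤ s → s + c ≠ 0 := fun s hs => by positivity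
  have hlap : ∀ s, 0 ≤ s → HasDerivAt (fun s => 4 * (s + 2 * c) / (s + c) ^ 2)
      ((-4 * s + -12 * c) / (s + c) ^ 3) s := fun s hs => by
    convert hasDerivAt_linear_div_pow 4 (8 * c) c 2 (hpos s hs) using 1
    · ext s; ring
    · field_simp
      ring
  rw [funext (qLap_log_norm_sq_add hc),
    qLap_comp_norm_sq hlap fun s hs => hasDerivAt_linear_div_pow (-4) (-12 * c) c 3 (hpos s hs)]
  have := hpos _ (sq_nonneg ‖x‖)
  field_simp
  ring

/-- Laplacian and bilaplacian of the regularized logarithm `log(|x|² + ε²)` on ℝ⁴. -/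
theorem lap_and_bilap_regularized_log (ε : ℝ) (hε : 0 < ε) (x : Quaternion ℝ) :
    qLap (fun y => Real.log (‖y‖^2 + ε^2)) x = 4 * (‖x‖^2 + 2*ε^2) / (‖x‖^2 + ε^2)^2 ∧
    qLap (qLap (fun y => Real.log (‖y‖^2 + ε^2))) x = -96 * ε^4 / (‖x‖^2 + ε^2)^4 := by
  have hε2 : 0 < ε ^ 2 := by positivity
  exact ⟨qLap_log_norm_sq_add hε2 x, by rw [qLap_qLap_log_norm_sq_add hε2, ← pow_mul]⟩
end

section
/- Let ρ > 0 and let a be a nonzero quaternion with |a| < ρ. Then the Laplacian at x = 0 of log|B(x)|, where B(x) = (ρ² − x·aᶜ)(ρ(x − a))⁻¹ is the punctual ρ-Blaschke factor at a, equals 2(|a|⁴ − ρ⁴)/(ρ⁴|a|²). Equivalently, since log|B(x)| = log|ρ²(aᶜ)⁻¹ − x| − log|x − a| + log(|a|/ρ), one has Δlog|B|(0) = 2/|ρ²(aᶜ)⁻¹|² − 2/|a|². -/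
open scoped RealInnerProductSpace
open Quaternion

lemma log_norm_eq (q : Quaternion ℝ) :
    (fun x : Quaternion ℝ => Real.log ‖x - q‖)
      = fun x => 2⁻¹ * Real.log ⟪x - q, x - q⟫ := by
  funext x
  rw [real_inner_self_eq_norm_sq, Real.log_pow]
  push_cast
  ring

lemma hasQ (q y : Quaternion ℝ) :
    HasFDerivAt (fun x : Quaternion ℝ => (⟪x - q, x - q⟫ : ℝ))
      ((fderivInnerCLM ℝ (y - q, y - q)).comp
        ((ContinuousLinearMap.id ℝ _).prod (ContinuousLinearMap.id ℝ _))) y := by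
  exact ((hasFDerivAt_id y).sub_const q).inner ℝ ((hasFDerivAt_id y).sub_const q)

lemma fderiv_log_norm (q y : Quaternion ℝ) (h : y ≠ q) (v : Quaternion ℝ) :
    fderiv ℝ (fun x : Quaternion ℝ => Real.log ‖x - q‖) y v
      = ⟪y - q, v⟫ / ⟪y - q, y - q⟫ := by
  have hyq : y - q ≠ 0 := sub_ne_zero.mpr h
  have hne : (⟪y - q, y - q⟫ : ℝ) ≠ 0 := by
    rw [real_inner_self_eq_norm_sq]
    simpa using hyq
  have hl := ((hasQ q y).log hne).const_mul (2⁻¹ : ℝ)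
  rw [log_norm_eq]
  rw [hl.fderiv]
  simp [fderivInnerCLM, real_inner_self_eq_norm_sq, real_inner_comm (y - q) v]
  have hnorm : (‖y - q‖ : ℝ) ^ 2 ≠ 0 := pow_ne_zero _ (norm_ne_zero_iff.mpr hyq)
  field_simp
  ring

lemma diff_log_norm (q y : Quaternion ℝ) (h : y ≠ q) :
    DifferentiableAt ℝ (fun x : Quaternion ℝ => Real.log ‖x - q‖) y := by
  have hne : (⟪y - q, y - q⟫ : ℝ) ≠ 0 := by
    rw [real_inner_self_eq_norm_sq]
    exact pow_ne_zero _ (norm_ne_zero_iff.mpr (sub_ne_zero.mpr h))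
  rw [log_norm_eq]
  exact (((hasQ q y).log hne).const_mul (2⁻¹ : ℝ)).differentiableAt

lemma hasφ (q v : Quaternion ℝ) (hq : q ≠ 0) :
    ∃ D : Quaternion ℝ →L[ℝ] ℝ,
      HasFDerivAt (fun y : Quaternion ℝ => (⟪y - q, v⟫ : ℝ) / ⟪y - q, y - q⟫) D 0 ∧
      D v = ⟪v, v⟫ / ‖q‖^2 - 2 * ⟪q, v⟫^2 / ‖q‖^4 := by
  have hne : (⟪(0:Quaternion ℝ) - q, (0:Quaternion ℝ) - q⟫ : ℝ) ≠ 0 := by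
    rw [real_inner_self_eq_norm_sq]
    exact pow_ne_zero _ (norm_ne_zero_iff.mpr (by simpa using hq))
  have hN : HasFDerivAt (fun y : Quaternion ℝ => (⟪y - q, v⟫ : ℝ))
      ((fderivInnerCLM ℝ ((0:Quaternion ℝ) - q, v)).comp
        ((ContinuousLinearMap.id ℝ _).prod 0)) 0 := by
    exact ((hasFDerivAt_id (0:Quaternion ℝ)).sub_const q).inner ℝ (hasFDerivAt_const v 0)
  have hQi := (hasDerivAt_inv hne).comp_hasFDerivAt 0 (hasQ q 0)
  have heq : (fun y : Quaternion ℝ => (⟪y - q, v⟫ : ℝ) / ⟪y - q, y - q⟫)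
      = fun y => (⟪y - q, v⟫ : ℝ) * (⟪y - q, y - q⟫)⁻¹ := by
    funext y; rw [div_eq_mul_inv]
  refine ⟨_, by rw [heq]; exact hN.mul hQi, ?_⟩
  simp [fderivInnerCLM, real_inner_comm]
  have hnorm : (‖q‖ : ℝ) ≠ 0 := norm_ne_zero_iff.mpr hq
  field_simp
  ring

lemma inner_qBasis_self (i : Fin 4) : (⟪qBasis i, qBasis i⟫ : ℝ) = 1 := by
  simp only [Quaternion.inner_def, Quaternion.re_mul, Quaternion.re_star, Quaternion.imI_star, Quaternion.imJ_star, Quaternion.imK_star]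
  fin_cases i <;> simp [qBasis, Quaternion.inner_def, Quaternion.re_mul]

lemma sum_inner_sq (q : Quaternion ℝ) :
    ∑ i : Fin 4, (⟪q, qBasis i⟫ : ℝ)^2 = ‖q‖^2 := by
  rw [← real_inner_self_eq_norm_sq, Fin.sum_univ_four]
  simp only [Quaternion.inner_def, Quaternion.re_mul, Quaternion.re_star, Quaternion.imI_star, Quaternion.imJ_star, Quaternion.imK_star]
  simp [qBasis, Quaternion.inner_def, Quaternion.re_mul, Quaternion.normSq_def']
  ring

lemma sum_terms (q : Quaternion ℝ) (hq : q ≠ 0) :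
    ∑ i : Fin 4, ((⟪qBasis i, qBasis i⟫ : ℝ)/‖q‖^2 - 2*⟪q, qBasis i⟫^2/‖q‖^4)
      = 2/‖q‖^2 := by
  simp only [inner_qBasis_self]
  rw [Finset.sum_sub_distrib, Finset.sum_const]
  have h2 : ∑ i : Fin 4, 2*(⟪q, qBasis i⟫:ℝ)^2/‖q‖^4 = 2*‖q‖^2/‖q‖^4 := by
    rw [← Finset.sum_div, ← Finset.mul_sum, sum_inner_sq]
  rw [h2]
  have hn : (‖q‖ : ℝ) ≠ 0 := norm_ne_zero_iff.mpr hq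
  simp only [Finset.card_univ, Fintype.card_fin, nsmul_eq_mul]
  field_simp
  ring

/-- The Laplacian at `x = 0` of `log|B|` for the punctual ρ-Blaschke factor
`B(x) = (ρ² − x aᶜ)(ρ(x − a))⁻¹` equals `2(|a|⁴ − ρ⁴)/(ρ⁴|a|²)`, which is also
`2/|ρ²(aᶜ)⁻¹|² − 2/|a|²`. -/
theorem laplacian_log_punctual_blaschke_at_zero (ρ : ℝ) (hρ : 0 < ρ)
    (a : Quaternion ℝ) (ha0 : a ≠ 0) (ha : ‖a‖ < ρ) :
    qLap (fun x => Real.log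
        ‖(((ρ^2 : ℝ) : Quaternion ℝ) - x * star a) * ((ρ : ℝ) • (x - a))⁻¹‖) 0 =
      2 * (‖a‖^4 - ρ^4) / (ρ^4 * ‖a‖^2) ∧
    2 * (‖a‖^4 - ρ^4) / (ρ^4 * ‖a‖^2) =
      2 / ‖((ρ^2 : ℝ) : Quaternion ℝ) * (star a)⁻¹‖^2 - 2 / ‖a‖^2 := by
  set p : Quaternion ℝ := ((ρ^2 : ℝ) : Quaternion ℝ) * (star a)⁻¹ with hp
  have hna : (‖a‖ : ℝ) ≠ 0 := norm_ne_zero_iff.mpr ha0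
  have hna0 : (0:ℝ) < ‖a‖ := norm_pos_iff.mpr ha0
  have hρ0 : (ρ:ℝ) ≠ 0 := ne_of_gt hρ
  have hsa : star a ≠ 0 := star_ne_zero.mpr ha0
  have hnp : ‖p‖ = ρ^2 / ‖a‖ := by
    rw [hp, norm_mul, norm_inv, norm_star, Quaternion.norm_coe, Real.norm_eq_abs,
      abs_of_pos (pow_pos hρ 2), div_eq_mul_inv]
  have hap : ‖a‖ < ‖p‖ := by
    rw [hnp, lt_div_iff₀ hna0]
    nlinarith
  have hp0 : p ≠ 0 := by
    intro h
    rw [h, norm_zero] at hap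
    exact absurd hap (not_lt.mpr (le_of_lt hna0))
  -- the open set where the log splits
  set V : Set (Quaternion ℝ) := {x | x ≠ a} ∩ {x | x ≠ p} with hV
  have hVo : IsOpen V := isOpen_ne.inter isOpen_ne
  have h0V : (0 : Quaternion ℝ) ∈ V :=
    ⟨fun h => ha0 h.symm, fun h => hp0 h.symm⟩
  set F : Quaternion ℝ → ℝ := fun x => Real.log
      ‖(((ρ^2 : ℝ) : Quaternion ℝ) - x * star a) * ((ρ : ℝ) • (x - a))⁻¹‖ with hF
  have hfg : ∀ x ∈ V, F x = (Real.log ‖x - p‖ - Real.log ‖x - a‖)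
      + (Real.log ‖a‖ - Real.log ρ) := by
    intro x hx
    have hxa : x - a ≠ 0 := sub_ne_zero.mpr hx.1
    have hxp : x - p ≠ 0 := sub_ne_zero.mpr hx.2
    have hps : p * star a = ((ρ^2 : ℝ) : Quaternion ℝ) := by
      rw [hp, mul_assoc, inv_mul_cancel₀ hsa, mul_one]
    have hrw : (((ρ^2 : ℝ) : Quaternion ℝ) - x * star a) = (p - x) * star a := by
      rw [sub_mul, hps]
    have hB : ‖(((ρ^2 : ℝ) : Quaternion ℝ) - x * star a) * ((ρ : ℝ) • (x - a))⁻¹‖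
        = (‖x - p‖ * ‖a‖) * (ρ * ‖x - a‖)⁻¹ := by
      rw [norm_mul, norm_inv, norm_smul, hrw, norm_mul, Quaternion.norm_star, norm_sub_rev,
        Real.norm_eq_abs, abs_of_pos hρ]
    rw [hF]
    simp only
    rw [hB, Real.log_mul (by
        have := norm_pos_iff.mpr hxp
        positivity) (by
        have := norm_pos_iff.mpr hxa
        positivity),
      Real.log_mul (norm_ne_zero_iff.mpr hxp) hna, Real.log_inv,
      Real.log_mul hρ0 (norm_ne_zero_iff.mpr hxa)]
    ring
  -- the first derivative, eventually near 0
  have hinner : ∀ v : Quaternion ℝ, (fun y => fderiv ℝ F y v) =ᶠ[nhds 0]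
      (fun y => (⟪y - p, v⟫ : ℝ) / ⟪y - p, y - p⟫ - ⟪y - a, v⟫ / ⟪y - a, y - a⟫) := by
    intro v
    filter_upwards [hVo.mem_nhds h0V] with y hy
    have hEv : F =ᶠ[nhds y] (fun x => (Real.log ‖x - p‖ - Real.log ‖x - a‖)
        + (Real.log ‖a‖ - Real.log ρ)) := by
      filter_upwards [hVo.mem_nhds hy] with z hz using hfg z hz
    rw [hEv.fderiv_eq, fderiv_add_const, fderiv_fun_sub (diff_log_norm p y hy.2)
      (diff_log_norm a y hy.1), ContinuousLinearMap.sub_apply,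
      fderiv_log_norm p y hy.2 v, fderiv_log_norm a y hy.1 v]
  -- each diagonal second derivative
  have hterm : ∀ v : Quaternion ℝ,
      fderiv ℝ (fun y => fderiv ℝ F y v) 0 v =
        (⟪v, v⟫/‖p‖^2 - 2*⟪p, v⟫^2/‖p‖^4) - (⟪v, v⟫/‖a‖^2 - 2*⟪a, v⟫^2/‖a‖^4) := by
    intro v
    obtain ⟨D1, hD1, hD1v⟩ := hasφ p v hp0
    obtain ⟨D2, hD2, hD2v⟩ := hasφ a v ha0
    rw [(hinner v).fderiv_eq, (hD1.fun_sub hD2).fderiv, ContinuousLinearMap.sub_apply,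
      hD1v, hD2v]
  have hlap : qLap F 0 = 2/‖p‖^2 - 2/‖a‖^2 := by
    unfold qLap
    rw [Finset.sum_congr rfl fun i _ => hterm (qBasis i), Finset.sum_sub_distrib]
    rw [sum_terms p hp0, sum_terms a ha0]
  constructor
  · rw [hlap, hnp]
    field_simp
  · rw [hnp]
    field_simp
end

section
/- Let ρ > 0 and let a be a non-real quaternion with 0 < |a| < ρ. Define g(x) = log|ρ⁴ − xρ²(a + aᶜ) + x²|a|²| − log|x² − x(a + aᶜ) + |a|²| (the logarithm of the modulus of the ρ-Blaschke factor at the sphere S_a, up to an additive constant). Then Δg(0) = (2/(ρ⁴|a|⁴))·(ρ⁴ − |a|⁴)·(2|a|² − (a + aᶜ)²). -/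
/-!
For real `c₀ ≠ 0, c₁, c₂` one has `Δ log ‖c₀ + x c₁ + x² c₂‖ = 2 (c₁² - 2 c₀ c₂) / c₀²` at `x = 0`;
the two logarithms in the theorem have coefficients `(ρ⁴, -2ρ² Re a, |a|²)` and `(|a|², -2 Re a, 1)`.

The second derivative along the line `τ ↦ τ e` is that of `τ ↦ log ‖A + τ B + τ² C‖` with
`A = c₀`, `B = c₁ e`, `C = c₂ e²`, namely `(‖B‖² + 2⟪A, C⟫) / ‖A‖² - 2⟪A, B⟫² / ‖A‖⁴`.
Since `Re (e²) = 2 (Re e)² - |e|²`, it only involves `|e|²` and `(Re e)²`, whose sums over the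
basis `1, i, j, k` are `4` and `1`.
-/

open Filter Topology Quaternion
open scoped RealInnerProductSpace

theorem deriv_deriv_log_comp {f f' : ℝ → ℝ} {f'' x : ℝ} (hf : ∀ τ, HasDerivAt f (f' τ) τ)
    (hf' : HasDerivAt f' f'' x) (hx : f x ≠ 0) :
    deriv (deriv fun τ => Real.log (f τ)) x = (f'' * f x - f' x ^ 2) / f x ^ 2 := by
  have hderiv : deriv (fun τ => Real.log (f τ)) =ᶠ[𝓝 x] fun τ => f' τ / f τ :=
    ((hf x).continuousAt.eventually_ne hx).mono fun τ hτ => ((hf τ).log hτ).deriv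
  rw [hderiv.deriv_eq, (hf'.fun_div (hf x) hx).deriv]
  ring

theorem deriv_deriv_log_norm_quadratic {F : Type*} [NormedAddCommGroup F] [InnerProductSpace ℝ F]
    {A : F} (B C : F) (hA : A ≠ 0) :
    deriv (deriv fun τ : ℝ => Real.log ‖A + τ • B + τ ^ 2 • C‖) 0 =
      (‖B‖ ^ 2 + 2 * ⟪A, C⟫) / ‖A‖ ^ 2 - 2 * ⟪A, B⟫ ^ 2 / ‖A‖ ^ 4 := by
  have hγ : ∀ τ : ℝ, HasDerivAt (fun τ : ℝ => A + τ • B + τ ^ 2 • C) (B + (2 * τ) • C) τ :=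
    fun τ => by
      simpa [add_assoc] using
        (((hasDerivAt_id τ).smul_const B).add ((hasDerivAt_pow 2 τ).smul_const C)).const_add A
  have hγ' : HasDerivAt (fun τ : ℝ => B + (2 * τ) • C) ((2 : ℝ) • C) 0 := by
    simpa using (((hasDerivAt_id (0 : ℝ)).const_mul 2).smul_const C).const_add B
  have hnormSq : ∀ τ : ℝ, HasDerivAt (fun τ : ℝ => ‖A + τ • B + τ ^ 2 • C‖ ^ 2)
      (2 * ⟪A + τ • B + τ ^ 2 • C, B + (2 * τ) • C⟫) τ := fun τ => (hγ τ).norm_sq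
  have hnormSq' : HasDerivAt (fun τ : ℝ => 2 * ⟪A + τ • B + τ ^ 2 • C, B + (2 * τ) • C⟫)
      (2 * (‖B‖ ^ 2 + 2 * ⟪A, C⟫)) 0 := by
    refine (((hγ 0).inner ℝ hγ').const_mul 2).congr_deriv ?_
    simp [inner_smul_right]
    ring
  have hlog : (fun τ : ℝ => Real.log ‖A + τ • B + τ ^ 2 • C‖) =
      fun τ => Real.log (‖A + τ • B + τ ^ 2 • C‖ ^ 2) / 2 := by
    funext τ
    rw [Real.log_pow]
    push_cast
    ring
  have hdiv : deriv (fun τ : ℝ => Real.log (‖A + τ • B + τ ^ 2 • C‖ ^ 2) / 2) =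
      fun τ => deriv (fun τ : ℝ => Real.log (‖A + τ • B + τ ^ 2 • C‖ ^ 2)) τ / 2 := by
    funext τ
    exact deriv_div_const _
  have hA' : ‖A + (0 : ℝ) • B + (0 : ℝ) ^ 2 • C‖ ^ 2 ≠ 0 := by simpa using hA
  rw [hlog, hdiv, deriv_div_const, deriv_deriv_log_comp hnormSq hnormSq' hA']
  have : ‖A‖ ≠ 0 := norm_ne_zero_iff.mpr hA
  simp only [zero_smul, add_zero, ne_eq, OfNat.ofNat_ne_zero, not_false_eq_true, zero_pow,
    mul_zero]
  field_simp

section SecondDerivatives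

variable {𝕜 E F : Type*} [NontriviallyNormedField 𝕜] [NormedAddCommGroup E] [NormedSpace 𝕜 E]
  [NormedAddCommGroup F] [NormedSpace 𝕜 F] {f : E → F} {x : E}

theorem ContDiffAt.eventually_differentiableAt {n : ℕ} (hf : ContDiffAt 𝕜 n f x) (hn : n ≠ 0) :
    ∀ᶠ y in 𝓝 x, DifferentiableAt 𝕜 f y :=
  (hf.eventually (by simp)).mono fun _ hy => hy.differentiableAt (by exact_mod_cast hn)

theorem ContDiffAt.differentiableAt_fderiv_apply (hf : ContDiffAt 𝕜 2 f x) (v : E) :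
    DifferentiableAt 𝕜 (fun y => fderiv 𝕜 f y v) x :=
  ((hf.fderiv_right (m := 1) le_rfl).differentiableAt one_ne_zero).clm_apply
    (differentiableAt_const v)

theorem fderiv_fderiv_sub_apply {g : E → F} (hf : ContDiffAt 𝕜 2 f x) (hg : ContDiffAt 𝕜 2 g x)
    (v : E) :
    fderiv 𝕜 (fun y => fderiv 𝕜 (fun z => f z - g z) y v) x v =
      fderiv 𝕜 (fun y => fderiv 𝕜 f y v) x v - fderiv 𝕜 (fun y => fderiv 𝕜 g y v) x v := by
  have hfirst : (fun y => fderiv 𝕜 (fun z => f z - g z) y v) =ᶠ[𝓝 x]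
      fun y => fderiv 𝕜 f y v - fderiv 𝕜 g y v := by
    filter_upwards [hf.eventually_differentiableAt two_ne_zero,
      hg.eventually_differentiableAt two_ne_zero] with y hfy hgy
    rw [fderiv_fun_sub hfy hgy, sub_apply]
  rw [hfirst.fderiv_eq, fderiv_fun_sub (hf.differentiableAt_fderiv_apply v)
    (hg.differentiableAt_fderiv_apply v), sub_apply]

theorem fderiv_fderiv_apply_eq_deriv_deriv_line (hf : ContDiffAt 𝕜 2 f x) (v : E) :
    fderiv 𝕜 (fun y => fderiv 𝕜 f y v) x v = deriv (deriv fun τ : 𝕜 => f (x + τ • v)) 0 := by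
  have hline : ∀ τ : 𝕜, HasDerivAt (fun τ : 𝕜 => x + τ • v) v τ := fun τ => by
    simpa using ((hasDerivAt_id τ).smul_const v).const_add x
  have hline0 : Tendsto (fun τ : 𝕜 => x + τ • v) (𝓝 0) (𝓝 x) := by
    simpa using (hline 0).continuousAt.tendsto
  have hderiv : deriv (fun τ : 𝕜 => f (x + τ • v)) =ᶠ[𝓝 0] fun τ => fderiv 𝕜 f (x + τ • v) v :=
    (hline0.eventually (hf.eventually_differentiableAt two_ne_zero)).mono fun τ hτ =>
      (hτ.hasFDerivAt.comp_hasDerivAt τ (hline τ)).deriv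
  rw [hderiv.deriv_eq]
  exact ((hf.differentiableAt_fderiv_apply v).hasFDerivAt.comp_hasDerivAt_of_eq (0 : 𝕜) (hline 0)
    (by simp)).deriv.symm

end SecondDerivatives

theorem qLap_sub {u v : ℍ[ℝ] → ℝ} {x : ℍ[ℝ]} (hu : ContDiffAt ℝ 2 u x)
    (hv : ContDiffAt ℝ 2 v x) : qLap (fun y => u y - v y) x = qLap u x - qLap v x := by
  simp only [qLap, ← Finset.sum_sub_distrib, fderiv_fderiv_sub_apply hu hv]

theorem normSq_qBasis (i : Fin 4) : normSq (qBasis i) = 1 := by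
  rw [normSq_def']
  fin_cases i <;> simp [qBasis]

section QuadraticPolynomial

variable {c₀ : ℝ} (c₁ c₂ : ℝ)

theorem contDiffAt_log_norm_quadratic (hc₀ : c₀ ≠ 0) :
    ContDiffAt ℝ 2 (fun x : ℍ[ℝ] => Real.log ‖(c₀ : ℍ[ℝ]) + x * c₁ + x ^ 2 * c₂‖) 0 := by
  have hP : ContDiff ℝ 2 fun x : ℍ[ℝ] => (c₀ : ℍ[ℝ]) + x * c₁ + x ^ 2 * c₂ := by fun_prop
  have hP0 : (c₀ : ℍ[ℝ]) + 0 * c₁ + 0 ^ 2 * c₂ ≠ 0 := by simpa using coe_injective.ne hc₀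
  exact (hP.contDiffAt.norm ℝ hP0).log (norm_ne_zero_iff.mpr hP0)

theorem deriv_deriv_log_norm_quadratic_line (hc₀ : c₀ ≠ 0) (e : ℍ[ℝ]) :
    deriv (deriv fun τ : ℝ =>
        Real.log ‖(c₀ : ℍ[ℝ]) + (0 + τ • e) * c₁ + (0 + τ • e) ^ 2 * c₂‖) 0 =
      ((c₁ ^ 2 - 2 * c₀ * c₂) * normSq e + (4 * c₀ * c₂ - 2 * c₁ ^ 2) * e.re ^ 2) / c₀ ^ 2 := by
  have hline : ∀ τ : ℝ, (c₀ : ℍ[ℝ]) + (0 + τ • e) * c₁ + (0 + τ • e) ^ 2 * c₂ =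
      (c₀ : ℍ[ℝ]) + τ • (e * c₁) + τ ^ 2 • (e ^ 2 * c₂) := fun τ => by
    simp [smul_pow]
  have hB : ‖e * c₁‖ ^ 2 = c₁ ^ 2 * normSq e := by
    rw [sq, ← normSq_eq_norm_mul_self, map_mul, normSq_coe, sq, mul_comm]
  have hAB : ⟪(c₀ : ℍ[ℝ]), e * c₁⟫ = c₀ * c₁ * e.re := by
    simp [Quaternion.inner_def]
    ring
  have hAC : ⟪(c₀ : ℍ[ℝ]), e ^ 2 * c₂⟫ = c₀ * c₂ * (2 * e.re ^ 2 - normSq e) := by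
    simp [Quaternion.inner_def, sq, normSq_def']
    ring
  simp only [hline]
  rw [deriv_deriv_log_norm_quadratic _ _ (by simpa using coe_injective.ne hc₀), hB, hAB, hAC,
    norm_coe, Real.norm_eq_abs, sq_abs, Even.pow_abs (by decide)]
  field_simp
  ring

theorem qLap_log_norm_quadratic (hc₀ : c₀ ≠ 0) :
    qLap (fun x => Real.log ‖(c₀ : ℍ[ℝ]) + x * c₁ + x ^ 2 * c₂‖) 0 =
      2 * (c₁ ^ 2 - 2 * c₀ * c₂) / c₀ ^ 2 := by
  simp only [qLap,
    fderiv_fderiv_apply_eq_deriv_deriv_line (contDiffAt_log_norm_quadratic c₁ c₂ hc₀),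
    deriv_deriv_log_norm_quadratic_line c₁ c₂ hc₀, Fin.sum_univ_four, normSq_qBasis]
  simp [qBasis]
  field_simp
  ring

end QuadraticPolynomial

theorem laplacian_log_spherical_blaschke_at_zero_general (ρ : ℝ) (hρ : 0 < ρ)
    (a : Quaternion ℝ) (ha0 : 0 < ‖a‖) :
    qLap (fun x =>
        Real.log ‖((ρ^4 : ℝ) : Quaternion ℝ) - x * ((ρ^2 : ℝ) : Quaternion ℝ) * (a + star a)
            + x^2 * ((‖a‖^2 : ℝ) : Quaternion ℝ)‖ -
        Real.log ‖x^2 - x * (a + star a) + ((‖a‖^2 : ℝ) : Quaternion ℝ)‖) 0 =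
      (2 / (ρ^4 * ‖a‖^4)) * (ρ^4 - ‖a‖^4) * (2 * ‖a‖^2 - ((a + star a).re)^2) := by
  have hρ4 : ρ ^ 4 ≠ 0 := by positivity
  have ha2 : ‖a‖ ^ 2 ≠ 0 := by positivity
  have hfun : (fun x : ℍ[ℝ] =>
        Real.log ‖((ρ^4 : ℝ) : Quaternion ℝ) - x * ((ρ^2 : ℝ) : Quaternion ℝ) * (a + star a)
            + x^2 * ((‖a‖^2 : ℝ) : Quaternion ℝ)‖ -
        Real.log ‖x^2 - x * (a + star a) + ((‖a‖^2 : ℝ) : Quaternion ℝ)‖) =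
      fun x => Real.log ‖((ρ ^ 4 : ℝ) : ℍ[ℝ]) + x * ((-(ρ ^ 2 * (2 * a.re)) : ℝ) : ℍ[ℝ])
          + x ^ 2 * ((‖a‖ ^ 2 : ℝ) : ℍ[ℝ])‖ -
        Real.log ‖((‖a‖ ^ 2 : ℝ) : ℍ[ℝ]) + x * ((-(2 * a.re) : ℝ) : ℍ[ℝ])
          + x ^ 2 * ((1 : ℝ) : ℍ[ℝ])‖ := by
    funext x
    rw [self_add_star']
    congr 3
    · simp only [coe_neg, coe_mul, mul_neg, ← mul_assoc, sub_eq_add_neg]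
    · simp only [coe_neg, coe_one, mul_neg, mul_one, sub_eq_add_neg]
      abel
  rw [hfun, qLap_sub (contDiffAt_log_norm_quadratic _ _ hρ4)
      (contDiffAt_log_norm_quadratic _ _ ha2),
    qLap_log_norm_quadratic _ _ hρ4, qLap_log_norm_quadratic _ _ ha2, self_add_star', re_coe]
  field_simp
  ring

/-- The Laplacian at `x = 0` of the logarithm of the modulus of the ρ-Blaschke
factor at the sphere `S_a` (up to an additive constant). -/
theorem laplacian_log_spherical_blaschke_at_zero (ρ : ℝ) (hρ : 0 < ρ)
    (a : Quaternion ℝ) (ha_nonreal : a.im ≠ 0) (ha0 : 0 < ‖a‖) (ha : ‖a‖ < ρ) :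
    qLap (fun x =>
        Real.log ‖((ρ^4 : ℝ) : Quaternion ℝ) - x * ((ρ^2 : ℝ) : Quaternion ℝ) * (a + star a)
            + x^2 * ((‖a‖^2 : ℝ) : Quaternion ℝ)‖ -
        Real.log ‖x^2 - x * (a + star a) + ((‖a‖^2 : ℝ) : Quaternion ℝ)‖) 0 =
      (2 / (ρ^4 * ‖a‖^4)) * (ρ^4 - ‖a‖^4) * (2 * ‖a‖^2 - ((a + star a).re)^2) :=
  laplacian_log_spherical_blaschke_at_zero_general ρ hρ a ha0
end
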